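/- Let v ∈ ℂ^{2n} be isotropic with (v,ρv) ≠ 0, and α ∈ ℂ∖{0}. Then for every λ ∈ ℂ∖{α,−α}: (i) ρ · p_{α,v}(−λ) · ρ = p_{α,v}(λ) (the twisting condition τ(p_{α,v}(λ)) = p_{α,v}(−λ)); (ii) if α ∈ ℝ and v ∈ ℝ^{2n}, then conj(p_{α,v}(conj λ)) = p_{α,v}(λ); (iii) if α is purely imaginary and conj(v) = ρv (equivalently the first n coordinates of v are real and the last n are purely imaginary), then conj(p_{α,v}(conj λ)) = p_{α,v}(λ). Hence under either condition in (ii) or (iii), p_{α,v} satisfies the U/K-reality condition, i.e. p_{α,v} is an element of the negative loop group L⁻(U). -/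
import Mathlib


open Matrix

noncomputable section

/-- Index type for `2n×2n` matrices in `n×n` block form. -/
abbrev Idx (n : ℕ) := Fin n ⊕ Fin n

/-- Diagonal entries of `I_{2n−1,1} = diag(1,…,1,−1)`. -/
def etaC (n : ℕ) : Idx n → ℂ :=
  Sum.elim (fun _ => 1) (fun i => if (i : ℕ) + 1 = n then -1 else 1)

/-- Diagonal entries of `ρ = diag(I_n, −I_n)`. -/
def rhoC (n : ℕ) : Idx n → ℂ := Sum.elim (fun _ => 1) (fun _ => -1)

/-- The complex bilinear form `(x,y) = xᵀ I_{2n−1,1} y` (no conjugation) on `ℂ^{2n}`. -/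
def formC (n : ℕ) (x y : Idx n → ℂ) : ℂ := ∑ a, etaC n a * x a * y a

/-- The vector `ρv`. -/
def rhoV (n : ℕ) (v : Idx n → ℂ) : Idx n → ℂ := fun a => rhoC n a * v a

/-- `I_{2n−1,1}` as a complex matrix. -/
def ImC (n : ℕ) : Matrix (Idx n) (Idx n) ℂ := Matrix.diagonal (etaC n)

/-- `ρ = diag(I_n, −I_n)` as a complex matrix. -/
def rhoM (n : ℕ) : Matrix (Idx n) (Idx n) ℂ := Matrix.diagonal (rhoC n)

/-- The projection `π_v(x) = ((ρv,x)/(ρv,v))·v` onto `ℂv` along the orthogonal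
complement of `ℂρv`, as a matrix (for `v` isotropic with `(v,ρv) ≠ 0`).
Note `π_{ρv} = piM n (rhoV n v)`. -/
def piM (n : ℕ) (v : Idx n → ℂ) : Matrix (Idx n) (Idx n) ℂ :=
  Matrix.of fun a b => v a * etaC n b * rhoV n v b / formC n (rhoV n v) v

/-- The simple element
`p_{α,v}(λ) = ((λ−α)/(λ+α))π_v + (I − π_v − π_{ρv}) + ((λ+α)/(λ−α))π_{ρv}`. -/
def simpleP (n : ℕ) (α : ℂ) (v : Idx n → ℂ) (lam : ℂ) : Matrix (Idx n) (Idx n) ℂ :=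
  ((lam - α) / (lam + α)) • piM n v + (1 - piM n v - piM n (rhoV n v))
    + ((lam + α) / (lam - α)) • piM n (rhoV n v)

lemma rhoC_sq (n : ℕ) (a : Idx n) : rhoC n a * rhoC n a = 1 := by
  cases a <;> simp [rhoC]

lemma rhoV_rhoV (n : ℕ) (v : Idx n → ℂ) : rhoV n (rhoV n v) = v := by
  funext a
  simp only [rhoV, ← mul_assoc, rhoC_sq, one_mul]

lemma formC_comm (n : ℕ) (x y : Idx n → ℂ) : formC n x y = formC n y x := by
  unfold formC
  exact Finset.sum_congr rfl fun a _ => by ring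

lemma rho_piM (n : ℕ) (v : Idx n → ℂ) :
    rhoM n * piM n v * rhoM n = piM n (rhoV n v) := by
  ext a b
  simp only [rhoM, Matrix.diagonal_mul, Matrix.mul_diagonal, piM, Matrix.of_apply,
    rhoV_rhoV, formC_comm n (rhoV n v) v]
  cases b <;> simp [rhoV, rhoC] <;> cases a <;> simp [rhoC] <;> ring

lemma rhoM_sq (n : ℕ) : rhoM n * rhoM n = 1 := by
  simp [rhoM, Matrix.diagonal_mul_diagonal, rhoC_sq]

lemma conj_etaC (n : ℕ) (a : Idx n) : starRingEnd ℂ (etaC n a) = etaC n a := by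
  cases a with
  | inl i => simp [etaC]
  | inr i => simp only [etaC, Sum.elim_inr]; split <;> simp

lemma conj_rhoC (n : ℕ) (a : Idx n) : starRingEnd ℂ (rhoC n a) = rhoC n a := by
  cases a <;> simp [rhoC]

lemma conj_formC (n : ℕ) (x y : Idx n → ℂ) :
    starRingEnd ℂ (formC n x y)
      = formC n (fun a => starRingEnd ℂ (x a)) (fun a => starRingEnd ℂ (y a)) := by
  unfold formC
  rw [map_sum]
  exact Finset.sum_congr rfl fun a _ => by rw [_root_.map_mul, _root_.map_mul, conj_etaC]

-- conj of piM when conj v = v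
lemma conj_piM_real (n : ℕ) (v : Idx n → ℂ) (hv : ∀ a, starRingEnd ℂ (v a) = v a) :
    (piM n v).map (starRingEnd ℂ) = piM n v := by
  have hrv : ∀ a, starRingEnd ℂ (rhoV n v a) = rhoV n v a := fun a => by
    simp [rhoV, _root_.map_mul, conj_rhoC, hv]
  ext a b
  simp [Matrix.map_apply, piM, map_div₀, _root_.map_mul, conj_etaC, hv, hrv, conj_formC]

-- conj of piM when conj v = rhoV v
lemma conj_piM_im (n : ℕ) (v : Idx n → ℂ)
    (hv : ∀ a, starRingEnd ℂ (v a) = rhoC n a * v a) :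
    (piM n v).map (starRingEnd ℂ) = piM n (rhoV n v) := by
  have hrv : ∀ a, starRingEnd ℂ (rhoV n v a) = v a := fun a => by
    rw [rhoV, _root_.map_mul, conj_rhoC, hv, ← mul_assoc, rhoC_sq, one_mul]
  ext a b
  simp only [Matrix.map_apply, piM, Matrix.of_apply, map_div₀, _root_.map_mul, conj_etaC,
    conj_formC, rhoV_rhoV]
  rw [hv, hrv]
  have e1 : (fun c : Idx n => starRingEnd ℂ (rhoV n v c)) = v := funext hrv
  have e2 : (fun c : Idx n => starRingEnd ℂ (v c)) = rhoV n v := funext hv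
  rw [e1, e2, formC_comm]
  simp [rhoV]

lemma map_dist (n : ℕ) (c d : ℂ) (M N : Matrix (Idx n) (Idx n) ℂ) :
    (c • M + (1 - M - N) + d • N).map (starRingEnd ℂ)
      = (starRingEnd ℂ c) • M.map (starRingEnd ℂ)
        + (1 - M.map (starRingEnd ℂ) - N.map (starRingEnd ℂ))
        + (starRingEnd ℂ d) • N.map (starRingEnd ℂ) := by
  ext a b
  simp [Matrix.map_apply, Matrix.add_apply, Matrix.sub_apply, Matrix.smul_apply,
    Matrix.one_apply, map_add, map_sub, _root_.map_mul, apply_ite (starRingEnd ℂ),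
    smul_eq_mul]

/-- Twisting and reality conditions for the simple element `p_{α,v}`:
(i) `τ(p_{α,v}(λ)) = ρ p_{α,v}(−λ) ρ⁻¹ = ... `, i.e. `ρ·p_{α,v}(−λ)·ρ = p_{α,v}(λ)`;
(ii) if `α` and `v` are real, then `conj(p_{α,v}(conj λ)) = p_{α,v}(λ)`;
(iii) if `α` is purely imaginary and `conj v = ρv`, then
`conj(p_{α,v}(conj λ)) = p_{α,v}(λ)`. Hence `p_{α,v} ∈ L⁻(U)`. -/
theorem stmt12 (n : ℕ) (hn : 2 ≤ n) (v : Idx n → ℂ)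
    (hviso : formC n v v = 0) (hvρ : formC n v (rhoV n v) ≠ 0)
    (α lam : ℂ) (hα : α ≠ 0) (h1 : lam ≠ α) (h2 : lam ≠ -α) :
    rhoM n * simpleP n α v (-lam) * rhoM n = simpleP n α v lam ∧
    (α.im = 0 → (∀ a, (v a).im = 0) →
      (simpleP n α v (starRingEnd ℂ lam)).map (starRingEnd ℂ) = simpleP n α v lam) ∧
    (α.re = 0 → (∀ a, starRingEnd ℂ (v a) = rhoC n a * v a) →
      (simpleP n α v (starRingEnd ℂ lam)).map (starRingEnd ℂ) = simpleP n α v lam) := by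
  have hBA : rhoM n * piM n (rhoV n v) * rhoM n = piM n v := by
    rw [rho_piM, rhoV_rhoV]
  refine ⟨?_, ?_, ?_⟩
  · unfold simpleP
    rw [show -lam - α = -(lam + α) from by ring, show -lam + α = -(lam - α) from by ring,
      neg_div_neg_eq, neg_div_neg_eq]
    simp only [Matrix.mul_add, Matrix.add_mul, Matrix.mul_sub, Matrix.sub_mul,
      Matrix.mul_smul, Matrix.smul_mul, Matrix.mul_one]
    rw [rho_piM, hBA, rhoM_sq]
    abel
  · intro hαim hvim
    have hvre : ∀ a, starRingEnd ℂ (v a) = v a :=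
      fun a => Complex.conj_eq_iff_im.mpr (hvim a)
    have hrv : ∀ a, starRingEnd ℂ (rhoV n v a) = rhoV n v a := fun a => by
      simp [rhoV, _root_.map_mul, conj_rhoC, hvre]
    have hcα : starRingEnd ℂ α = α := Complex.conj_eq_iff_im.mpr hαim
    unfold simpleP
    rw [map_dist, conj_piM_real n v hvre, conj_piM_real n (rhoV n v) hrv,
      map_div₀, map_div₀, map_sub, map_add, Complex.conj_conj, hcα]
  · intro hαre hv
    have hcα : starRingEnd ℂ α = -α := by
      apply Complex.ext <;> simp [hαre]
    have hrv : ∀ a, starRingEnd ℂ (rhoV n v a) = v a := fun a => by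
      rw [rhoV, _root_.map_mul, conj_rhoC, hv, ← mul_assoc, rhoC_sq, one_mul]
    have hv' : ∀ a, starRingEnd ℂ (rhoV n v a) = rhoC n a * rhoV n v a := fun a => by
      rw [hrv, rhoV, ← mul_assoc, rhoC_sq, one_mul]
    unfold simpleP
    rw [map_dist, conj_piM_im n v hv, conj_piM_im n (rhoV n v) hv', rhoV_rhoV,
      map_div₀, map_div₀, map_sub, map_add, Complex.conj_conj, hcα,
      sub_neg_eq_add, ← sub_eq_add_neg]
    abel


end
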